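/- arXiv:2410.16401 — 2 statements merged into one kernel-verified Lean document; each statement's English description precedes it below -/
import Mathlib

section
/- Assume each x_i has unit norm, ‖x_i‖ = 1. If θ ∈ ℝ^{md} satisfies L(θ) = 0 (equivalently f_i(θ) = y_i for all i), then the trace of the Hessian of L at θ equals 2 Σ_{i=1}^n Σ_{j=1}^m φ'(θ_j · x_i)², i.e., Tr D²L(θ) = 2 G(θ). -/
open scoped RealInnerProductSpace
open Real Filter

noncomputable section

/-- The parameter space ℝ^{md}: m blocks θ_j ∈ ℝ^d, with the Euclidean norm. -/
abbrev Param (m d : ℕ) : Type := PiLp 2 (fun _ : Fin m => EuclideanSpace ℝ (Fin d))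

/-- Network output f_i(θ) = Σ_j φ(θ_j · x_i). -/
def netF {n m d : ℕ} (φ : ℝ → ℝ) (x : Fin n → EuclideanSpace ℝ (Fin d)) (i : Fin n)
    (θ : Param m d) : ℝ := ∑ j, φ ⟪θ j, x i⟫

/-- Euclidean gradient Df_i(θ), with j-th block φ'(θ_j · x_i) x_i. -/
def gradF {n m d : ℕ} (φ : ℝ → ℝ) (x : Fin n → EuclideanSpace ℝ (Fin d)) (i : Fin n)
    (θ : Param m d) : Param m d := WithLp.toLp 2 (fun j => (deriv φ ⟪θ j, x i⟫) • x i)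

/-- Implicit regularizer G(θ) = Σ_i Σ_j φ'(θ_j · x_i)². -/
def regG {n m d : ℕ} (φ : ℝ → ℝ) (x : Fin n → EuclideanSpace ℝ (Fin d))
    (θ : Param m d) : ℝ := ∑ i, ∑ j, (deriv φ ⟪θ j, x i⟫) ^ 2

/-- Euclidean gradient DG(θ), with j-th block Σ_i 2 φ'(θ_j·x_i) φ''(θ_j·x_i) x_i. -/
def gradRegG {n m d : ℕ} (φ : ℝ → ℝ) (x : Fin n → EuclideanSpace ℝ (Fin d))
    (θ : Param m d) : Param m d :=
  WithLp.toLp 2 (fun j => ∑ i, (2 * deriv φ ⟪θ j, x i⟫ * deriv (deriv φ) ⟪θ j, x i⟫) • x i)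

/-- Squared loss L(θ) = Σ_i (f_i(θ) − y_i)². -/
def lossL {n m d : ℕ} (φ : ℝ → ℝ) (x : Fin n → EuclideanSpace ℝ (Fin d)) (y : Fin n → ℝ)
    (θ : Param m d) : ℝ := ∑ i, (netF φ x i θ - y i) ^ 2

/-- Jacobian Df(θ) : ℝ^{md} → ℝ^n, whose i-th row is Df_i(θ). -/
def jacobian {n m d : ℕ} (φ : ℝ → ℝ) (x : Fin n → EuclideanSpace ℝ (Fin d))
    (θ : Param m d) : Param m d →ₗ[ℝ] (Fin n → ℝ) :=
  LinearMap.pi fun i => (innerSL ℝ (gradF φ x i θ)).toLinearMap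

/-- Riemannian gradient ∇G(θ): orthogonal projection of DG(θ) onto ker Df(θ). -/
def rgradG {n m d : ℕ} (φ : ℝ → ℝ) (x : Fin n → EuclideanSpace ℝ (Fin d))
    (θ : Param m d) : Param m d :=
  ((LinearMap.ker (jacobian φ x θ)).orthogonalProjectionOnto (gradRegG φ x θ) : Param m d)

/-! At a zero-loss point every residual `f_i(θ) - y_i` vanishes, so in
`D²L = 2 ∑ᵢ (Dfᵢ ⊗ Dfᵢ + (fᵢ - yᵢ) D²fᵢ)` only the Gauss–Newton term survives. Its trace over
the standard basis is `2 ∑ᵢ ‖∇fᵢ‖²`, and `‖∇fᵢ‖² = ∑ⱼ φ'(θⱼ·xᵢ)² ‖xᵢ‖²`. -/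

theorem iteratedFDeriv_two_sq_apply_of_eq_zero {E : Type*} [NormedAddCommGroup E]
    [NormedSpace ℝ E] {g : E → ℝ} {g' : E →L[ℝ] ℝ} {z : E} (hg : ContDiff ℝ 2 g)
    (hg' : HasFDerivAt g g' z) (hz : g z = 0) (v : E) :
    iteratedFDeriv ℝ 2 (fun w => g w ^ 2) z ![v, v] = 2 * g' v ^ 2 := by
  have hg1 : Differentiable ℝ g := hg.differentiable (by norm_num)
  have hg2 : Differentiable ℝ (fderiv ℝ g) :=
    (hg.fderiv_right (m := 1) (by norm_num)).differentiable (by norm_num)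
  have hfd : fderiv ℝ (fun w => g w ^ 2) = fun w => (2 * g w) • fderiv ℝ g w := by
    funext w
    simpa [two_mul, add_smul] using ((hg1 w).hasFDerivAt.pow 2).fderiv
  have hD : HasFDerivAt (fun w => (2 * g w) • fderiv ℝ g w)
      ((2 * g z) • fderiv ℝ (fderiv ℝ g) z + ((2 : ℝ) • fderiv ℝ g z).smulRight (fderiv ℝ g z)) z :=
    ((hg1 z).hasFDerivAt.const_mul 2).fun_smul (hg2 z).hasFDerivAt
  rw [iteratedFDeriv_two_apply, hfd, hD.fderiv, hg'.fderiv]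
  simp [hz]
  ring

theorem inner_toLp_single_single {ι κ : Type*} [Fintype ι] [Fintype κ] [DecidableEq ι]
    [DecidableEq κ] (w : PiLp 2 (fun _ : ι => EuclideanSpace ℝ κ)) (j : ι) (k : κ) :
    ⟪w, WithLp.toLp 2 (Pi.single j (EuclideanSpace.single k (1 : ℝ)))⟫ = w j k := by
  rw [PiLp.inner_apply, Finset.sum_eq_single j (fun b _ hb => by simp [hb]) (by simp)]
  simp [EuclideanSpace.inner_single_right]

theorem sum_sum_inner_toLp_single_sq {ι κ : Type*} [Fintype ι] [Fintype κ] [DecidableEq ι]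
    [DecidableEq κ] (w : PiLp 2 (fun _ : ι => EuclideanSpace ℝ κ)) :
    ∑ j, ∑ k, ⟪w, WithLp.toLp 2 (Pi.single j (EuclideanSpace.single k (1 : ℝ)))⟫ ^ 2 = ‖w‖ ^ 2 := by
  simp only [inner_toLp_single_single]
  simp [PiLp.norm_sq_eq_of_L2]

section Network

variable {n m d : ℕ} {φ : ℝ → ℝ} {x : Fin n → EuclideanSpace ℝ (Fin d)}

theorem hasFDerivAt_netF (hφ : Differentiable ℝ φ) (i : Fin n) (θ : Param m d) :
    HasFDerivAt (netF φ x i) (innerSL ℝ (gradF φ x i θ)) θ := by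
  refine (HasFDerivAt.fun_sum fun j _ => (hφ _).hasDerivAt.comp_hasFDerivAt θ
    ((PiLp.proj 2 _ j).hasFDerivAt.inner ℝ (hasFDerivAt_const (x i) θ))).congr_fderiv ?_
  ext v
  simp only [gradF, innerSL_apply_apply, real_inner_smul_left,
    PiLp.inner_apply (f := fun _ : Fin m => EuclideanSpace ℝ (Fin d))]
  simp [real_inner_comm]

theorem contDiff_netF {k : WithTop ℕ∞} (hφ : ContDiff ℝ k φ) (i : Fin n) :
    ContDiff ℝ k (netF (m := m) φ x i) :=
  ContDiff.sum fun j _ =>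
    hφ.comp ((PiLp.proj 2 (fun _ => EuclideanSpace ℝ (Fin d)) j).contDiff.inner ℝ contDiff_const)

theorem norm_sq_gradF (hx : ∀ i, ‖x i‖ = 1) (i : Fin n) (θ : Param m d) :
    ‖gradF φ x i θ‖ ^ 2 = ∑ j, deriv φ ⟪θ j, x i⟫ ^ 2 := by
  simp [gradF, PiLp.norm_sq_eq_of_L2, norm_smul, hx i]

theorem iteratedFDeriv_two_lossL_apply_self_of_fit {y : Fin n → ℝ} (hφ : ContDiff ℝ 2 φ)
    {θ : Param m d} (hfit : ∀ i, netF φ x i θ = y i) (v : Param m d) :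
    iteratedFDeriv ℝ 2 (lossL φ x y) θ ![v, v] = 2 * ∑ i, ⟪gradF φ x i θ, v⟫ ^ 2 := by
  have hres : ∀ i, ContDiff ℝ 2 fun θ' : Param m d => netF φ x i θ' - y i := fun i =>
    (contDiff_netF hφ i).sub contDiff_const
  have hφ1 : Differentiable ℝ φ := hφ.differentiable (by norm_num)
  unfold lossL
  rw [iteratedFDeriv_fun_sum_apply fun i _ => ((hres i).pow 2).contDiffAt,
    sum_apply, Finset.mul_sum]
  refine Finset.sum_congr rfl fun i _ => ?_
  rw [iteratedFDeriv_two_sq_apply_of_eq_zero (hres i) ((hasFDerivAt_netF hφ1 i θ).sub_const (y i))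
    (sub_eq_zero.2 (hfit i)), innerSL_apply_apply]

end Network

theorem stmt_4_general
    (n m d : ℕ)
    (x : Fin n → EuclideanSpace ℝ (Fin d)) (hx : ∀ i, ‖x i‖ = 1)
    (y : Fin n → ℝ)
    (φ : ℝ → ℝ) (hφ : ContDiff ℝ (⊤ : ℕ∞) φ)
    (θ : Param m d)
    (hfit : ∀ i, netF φ x i θ = y i) :
    ∑ j : Fin m, ∑ k : Fin d,
        iteratedFDeriv ℝ 2 (lossL φ x y) θ
          ![(WithLp.toLp 2 (Pi.single j (EuclideanSpace.single k (1 : ℝ))) : Param m d),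
            (WithLp.toLp 2 (Pi.single j (EuclideanSpace.single k (1 : ℝ))) : Param m d)]
      = 2 * regG φ x θ := by
  calc _ = 2 * ∑ i, ∑ j : Fin m, ∑ k : Fin d,
        ⟪gradF φ x i θ, WithLp.toLp 2 (Pi.single j (EuclideanSpace.single k (1 : ℝ)))⟫ ^ 2 := by
        simp only [iteratedFDeriv_two_lossL_apply_self_of_fit (hφ.of_le (by norm_cast)) hfit,
          ← Finset.mul_sum]
        congr 1
        exact (Finset.sum_congr rfl fun j _ => Finset.sum_comm).trans Finset.sum_comm
    _ = 2 * ∑ i, ‖gradF φ x i θ‖ ^ 2 := by simp only [sum_sum_inner_toLp_single_sq]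
    _ = 2 * regG φ x θ := by simp only [norm_sq_gradF hx, regG]

/-- at any zero-loss point, Tr D²L(θ) = 2 G(θ) = 2 Σ_i Σ_j φ'(θ_j·x_i)². -/
theorem stmt_4
    (n m d : ℕ) (hn : 1 ≤ n) (hm : 1 ≤ m) (hd : 1 ≤ d)
    (x : Fin n → EuclideanSpace ℝ (Fin d)) (hx : ∀ i, ‖x i‖ = 1)
    (y : Fin n → ℝ)
    (φ : ℝ → ℝ) (hφ : ContDiff ℝ (⊤ : ℕ∞) φ)
    (θ : Param m d)
    (hfit : ∀ i, netF φ x i θ = y i) :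
    ∑ j : Fin m, ∑ k : Fin d,
        iteratedFDeriv ℝ 2 (lossL φ x y) θ
          ![(WithLp.toLp 2 (Pi.single j (EuclideanSpace.single k (1 : ℝ))) : Param m d),
            (WithLp.toLp 2 (Pi.single j (EuclideanSpace.single k (1 : ℝ))) : Param m d)]
      = 2 * regG φ x θ :=
  stmt_4_general n m d x hx y φ hφ θ hfit
end
end

section
/- Assume the coherence assumption with constant μ > 0 and φ'(z) ≥ ρ1 > 0 for all z ∈ ℝ, and set C = 4 m μ ρ1². Let θ̄ : [0, ∞) → ℝ^{md} be differentiable with θ̄'(t) = −DL(θ̄(t)) for all t ≥ 0 (the Euclidean gradient flow of the loss). Then for all t ≥ 0: L(θ̄(t)) ≤ e^{−C t} · L(θ̄(0)). -/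
open scoped RealInnerProductSpace
open Real Filter

noncomputable section

instance instContinuousSMulParam (m d : ℕ) : ContinuousSMul ℝ (Param m d) :=
  IsBoundedSMul.continuousSMul

/-!
Along the flow, `d/dt L(θ(t)) = -‖∇L(θ(t))‖²`. The gradient is `∑ᵢ 2 rᵢ ∇fᵢ` with residuals
`rᵢ = fᵢ - yᵢ`, and its `j`-th block is `∑ᵢ 2 rᵢ φ'(θⱼ · xᵢ) xᵢ`; coherence together with
`φ' ≥ ρ1` bounds the squared norm of each of the `m` blocks below by `4 μ ρ1² L`. Hence
`‖∇L‖² ≥ C L`, and Grönwall's inequality gives the exponential decay.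
-/

theorem le_mul_exp_of_hasDerivAt_le_mul {f f' : ℝ → ℝ} {K : ℝ}
    (hf : ∀ s, 0 ≤ s → HasDerivAt f (f' s) s) (bound : ∀ s, 0 ≤ s → f' s ≤ K * f s)
    {t : ℝ} (ht : 0 ≤ t) : f t ≤ f 0 * Real.exp (K * t) := by
  have h := le_gronwallBound_of_liminf_deriv_right_le (f := f) (f' := f') (ε := 0)
    (fun s hs => (hf s hs.1).continuousAt.continuousWithinAt)
    (fun s hs _ hr => (hf s hs.1).hasDerivWithinAt.liminf_right_slope_le hr) le_rfl
    (fun s hs => by simpa using bound s hs.1) t ⟨ht, le_rfl⟩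
  simpa [gronwallBound_ε0] using h

theorem hasDerivAt_comp_of_gradient_flow {E : Type*} [NormedAddCommGroup E]
    [InnerProductSpace ℝ E] [CompleteSpace E] {F : E → ℝ} {γ : ℝ → E} {t : ℝ}
    (hF : DifferentiableAt ℝ F (γ t)) (hγ : HasDerivAt γ (-gradient F (γ t)) t) :
    HasDerivAt (F ∘ γ) (-‖gradient F (γ t)‖ ^ 2) t := by
  have h := (hasGradientAt_iff_hasFDerivAt.mp hF.hasGradientAt).comp_hasDerivAt t hγ
  rwa [InnerProductSpace.toDual_apply_apply, inner_neg_right, real_inner_self_eq_norm_sq] at h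

theorem hasGradientAt_sum_sq_sub {E ι : Type*} [NormedAddCommGroup E] [InnerProductSpace ℝ E]
    [CompleteSpace E] [Fintype ι] {f : ι → E → ℝ} {g : ι → E} {θ : E}
    (hf : ∀ i, HasGradientAt (f i) (g i) θ) (y : ι → ℝ) :
    HasGradientAt (fun θ => ∑ i, (f i θ - y i) ^ 2) (∑ i, (2 * (f i θ - y i)) • g i) θ := by
  rw [hasGradientAt_iff_hasFDerivAt, map_sum]
  refine HasFDerivAt.fun_sum fun i _ => ?_
  have h := ((hf i).hasFDerivAt.sub_const (y i)).pow 2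
  simpa [map_smul] using h

section TwoLayerNetwork

variable {n m d : ℕ} (φ : ℝ → ℝ) (x : Fin n → EuclideanSpace ℝ (Fin d))

theorem hasGradientAt_netF (hφ : Differentiable ℝ φ) (i : Fin n) (θ : Param m d) :
    HasGradientAt (netF φ x i) (gradF φ x i θ) θ := by
  have hblock (j : Fin m) : HasFDerivAt (fun θ : Param m d => φ ⟪θ j, x i⟫)
      (deriv φ ⟪θ j, x i⟫ • (innerSL ℝ (x i)).comp (PiLp.proj 2 _ j)) θ := by
    have hproj := ((innerSL ℝ (x i)).comp
      (PiLp.proj (𝕜 := ℝ) 2 (fun _ : Fin m => EuclideanSpace ℝ (Fin d)) j)).hasFDerivAt (x := θ)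
    simp only [ContinuousLinearMap.coe_comp, Function.comp_def, PiLp.proj_apply,
      innerSL_apply_apply, real_inner_comm _ (x i)] at hproj
    exact (hφ _).hasDerivAt.comp_hasFDerivAt θ hproj
  rw [hasGradientAt_iff_hasFDerivAt]
  refine (HasFDerivAt.fun_sum fun j _ => hblock j).congr_fderiv ?_
  ext v
  simp only [FunLike.coe_sum, Finset.sum_apply, FunLike.coe_smul,
    Pi.smul_apply, ContinuousLinearMap.coe_comp, Function.comp_apply, PiLp.proj_apply,
    innerSL_apply_apply, smul_eq_mul, InnerProductSpace.toDual_apply_apply]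
  rw [PiLp.inner_apply]
  simp only [gradF, real_inner_smul_left, real_inner_comm (x i)]

theorem hasGradientAt_lossL (hφ : Differentiable ℝ φ) (y : Fin n → ℝ) (θ : Param m d) :
    HasGradientAt (lossL φ x y) (∑ i, (2 * (netF φ x i θ - y i)) • gradF φ x i θ) θ :=
  hasGradientAt_sum_sq_sub (fun i => hasGradientAt_netF φ x hφ i θ) y

theorem mul_sum_sq_le_norm_sum_smul_gradF_sq {μ ρ1 : ℝ} (hμ : 0 ≤ μ)
    (hcoh : ∀ c : Fin n → ℝ, μ * ∑ i, (c i) ^ 2 ≤ ‖∑ i, c i • x i‖ ^ 2)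
    (hρ1 : 0 ≤ ρ1) (hφ' : ∀ z, ρ1 ≤ deriv φ z) (θ : Param m d) (c : Fin n → ℝ) :
    m * μ * ρ1 ^ 2 * ∑ i, c i ^ 2 ≤ ‖∑ i, c i • gradF φ x i θ‖ ^ 2 := by
  have hblock (j : Fin m) : μ * ρ1 ^ 2 * ∑ i, c i ^ 2 ≤ ‖(∑ i, c i • gradF φ x i θ) j‖ ^ 2 := by
    have hj : (∑ i, c i • gradF φ x i θ) j = ∑ i, (c i * deriv φ ⟪θ j, x i⟫) • x i := by
      simp [gradF, mul_smul]
    calc μ * ρ1 ^ 2 * ∑ i, c i ^ 2 = μ * ∑ i, ρ1 ^ 2 * c i ^ 2 := by rw [mul_assoc, Finset.mul_sum]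
      _ ≤ μ * ∑ i, (c i * deriv φ ⟪θ j, x i⟫) ^ 2 := by
        gcongr with i
        rw [mul_pow, mul_comm]
        gcongr
        exact hφ' _
      _ ≤ ‖(∑ i, c i • gradF φ x i θ) j‖ ^ 2 := hj ▸ hcoh _
  calc (m : ℝ) * μ * ρ1 ^ 2 * ∑ i, c i ^ 2 = ∑ _j : Fin m, μ * ρ1 ^ 2 * ∑ i, c i ^ 2 := by
        rw [Finset.sum_const, Finset.card_univ, Fintype.card_fin, nsmul_eq_mul]; ring
    _ ≤ ‖∑ i, c i • gradF φ x i θ‖ ^ 2 := by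
        rw [PiLp.norm_sq_eq_of_L2]
        exact Finset.sum_le_sum fun j _ => hblock j

theorem mul_lossL_le_norm_gradient_sq (hφ : Differentiable ℝ φ) {μ ρ1 : ℝ} (hμ : 0 ≤ μ)
    (hcoh : ∀ c : Fin n → ℝ, μ * ∑ i, (c i) ^ 2 ≤ ‖∑ i, c i • x i‖ ^ 2)
    (hρ1 : 0 ≤ ρ1) (hφ' : ∀ z, ρ1 ≤ deriv φ z) (y : Fin n → ℝ) (θ : Param m d) :
    4 * m * μ * ρ1 ^ 2 * lossL φ x y θ ≤ ‖gradient (lossL φ x y) θ‖ ^ 2 := by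
  rw [(hasGradientAt_lossL φ x hφ y θ).gradient]
  refine le_of_eq_of_le ?_ (mul_sum_sq_le_norm_sum_smul_gradF_sq φ x hμ hcoh hρ1 hφ' θ _)
  simp only [lossL, mul_pow, ← Finset.mul_sum]
  ring

end TwoLayerNetwork

theorem stmt_10_general
    (n m d : ℕ)
    (x : Fin n → EuclideanSpace ℝ (Fin d))
    (μ : ℝ) (hμ : 0 < μ)
    (hcoh : ∀ c : Fin n → ℝ, μ * ∑ i, (c i) ^ 2 ≤ ‖∑ i, c i • x i‖ ^ 2)
    (y : Fin n → ℝ)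
    (φ : ℝ → ℝ) (hφ : ContDiff ℝ (⊤ : ℕ∞) φ)
    (ρ1 : ℝ) (hρ1 : 0 < ρ1)
    (hφ' : ∀ z, ρ1 ≤ deriv φ z)
    (C : ℝ) (hC : C = 4 * (m : ℝ) * μ * ρ1 ^ 2)
    (θb : ℝ → Param m d)
    (hflow : ∀ t, 0 ≤ t → HasDerivAt θb (-(gradient (lossL φ x y) (θb t))) t) :
    ∀ t, 0 ≤ t → lossL φ x y (θb t) ≤ Real.exp (-(C * t)) * lossL φ x y (θb 0) := by
  intro t ht
  have hφd : Differentiable ℝ φ := hφ.differentiable (by simp)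
  have hL : ∀ s, 0 ≤ s → HasDerivAt (lossL φ x y ∘ θb)
      (-‖gradient (lossL φ x y) (θb s)‖ ^ 2) s := fun s hs =>
    hasDerivAt_comp_of_gradient_flow
      (hasGradientAt_lossL φ x hφd y (θb s)).differentiableAt (hflow s hs)
  have hdecay : ∀ s, 0 ≤ s → -‖gradient (lossL φ x y) (θb s)‖ ^ 2 ≤ -C * lossL φ x y (θb s) :=
    fun s _ => by
      have := mul_lossL_le_norm_gradient_sq φ x hφd hμ.le hcoh hρ1.le hφ' y (θb s)
      rw [hC]; linarith
  have := le_mul_exp_of_hasDerivAt_le_mul hL hdecay ht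
  simpa [mul_comm] using this

/-- along the Euclidean gradient flow of the loss,
L(θ̄(t)) ≤ e^{−Ct} L(θ̄(0)) with C = 4 m μ ρ1². -/
theorem stmt_10
    (n m d : ℕ) (hn : 1 ≤ n) (hm : 1 ≤ m) (hd : 1 ≤ d)
    (x : Fin n → EuclideanSpace ℝ (Fin d)) (hx : ∀ i, ‖x i‖ = 1)
    (μ : ℝ) (hμ : 0 < μ)
    (hcoh : ∀ c : Fin n → ℝ, μ * ∑ i, (c i) ^ 2 ≤ ‖∑ i, c i • x i‖ ^ 2)
    (y : Fin n → ℝ)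
    (φ : ℝ → ℝ) (hφ : ContDiff ℝ (⊤ : ℕ∞) φ)
    (ρ1 : ℝ) (hρ1 : 0 < ρ1)
    (hφ' : ∀ z, ρ1 ≤ deriv φ z)
    (C : ℝ) (hC : C = 4 * (m : ℝ) * μ * ρ1 ^ 2)
    (θb : ℝ → Param m d)
    (hflow : ∀ t, 0 ≤ t → HasDerivAt θb (-(gradient (lossL φ x y) (θb t))) t) :
    ∀ t, 0 ≤ t → lossL φ x y (θb t) ≤ Real.exp (-(C * t)) * lossL φ x y (θb 0) :=
  stmt_10_general n m d x μ hμ hcoh y φ hφ ρ1 hρ1 hφ' C hC θb hflow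
end
end
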